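/- Let q be a squarefree positive integer and, for each prime p dividing q, let α_p be a complex number such that 1 − α_p·p^{−1/2} + p^{−1} ≠ 0 and 1 − (α_p²−1)·p^{−1} + (α_p²−1)·p^{−2} − p^{−3} ≠ 0. For each divisor ℓ of q define Lhalf(ℓ) := ∏_{p∣ℓ} (1 − α_p·p^{−1/2} + p^{−1})^{−1} and Lsym(ℓ) := ∏_{p∣ℓ} (1 − (α_p²−1)·p^{−1} + (α_p²−1)·p^{−2} − p^{−3})^{−1}. Then Σ_{ℓ∣q} (Lsym(ℓ)/Lhalf(ℓ)²)·(φ(ℓ)/ℓ) = 2^{ω(q)} · (ν(q)·φ(q)/q²) · (Lsym(q)/Lhalf(q)). (This is the second identity of Lemma 3.2 of the paper, with α_p = λ_f(p), Lhalf(ℓ) = L_ℓ(1/2,f), and Lsym(ℓ) = L_ℓ(1,sym²f).) -/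

import Mathlib

/-!
Writing `x = p^{-1/2}`, `H = 1 - α_p x + x²` and `S = 1 - (α_p² - 1)x² + (α_p² - 1)x⁴ - x⁶`, each
summand is the value at `ℓ` of the multiplicative function `g(p) = H² (1 - x²) / S` on squarefree
integers, so the sum over `ℓ ∣ q` is `∏_{p ∣ q} (1 + g(p))`. The polynomial identity
`S + H² (1 - x²) = 2 (1 + x²)(1 - x²) H` turns each factor into `2 (1 + p⁻¹)(1 - p⁻¹) H / S`,
which is the Euler factor of the right-hand side.
-/

open Finset

theorem Nat.cast_totient_div_self {K : Type*} [Field K] [CharZero K] {n : ℕ} (hn : n ≠ 0) :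
    (n.totient : K) / n = ∏ p ∈ n.primeFactors, (1 - (p : K)⁻¹) := by
  have := congrArg (Rat.cast : ℚ → K) (Nat.totient_eq_mul_prod_factors n)
  push_cast at this
  rw [this, mul_div_cancel_left₀ _ (Nat.cast_ne_zero.2 hn)]

open ArithmeticFunction in
theorem Nat.sum_divisors_prod_primeFactors_of_squarefree {R : Type*} [CommSemiring R] {n : ℕ}
    (hn : Squarefree n) (f : ℕ → R) :
    ∑ d ∈ n.divisors, ∏ p ∈ d.primeFactors, f p = ∏ p ∈ n.primeFactors, (1 + f p) :=
  calc ∑ d ∈ n.divisors, ∏ p ∈ d.primeFactors, f p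
      = ∑ d ∈ n.divisors, prodPrimeFactors f d := sum_congr rfl fun d hd =>
        (prodPrimeFactors_apply (Nat.pos_of_mem_divisors hd).ne').symm
    _ = ∏ p ∈ n.primeFactors, (1 + prodPrimeFactors f p) :=
        ((IsMultiplicative.prodPrimeFactors f).prodPrimeFactors_one_add_of_squarefree hn).symm
    _ = ∏ p ∈ n.primeFactors, (1 + f p) := prod_congr rfl fun p hp => by
        have hp' := Nat.prime_of_mem_primeFactors hp
        rw [prodPrimeFactors_apply hp'.ne_zero, hp'.primeFactors, prod_singleton]

theorem Complex.cpow_neg_one_half_sq (z : ℂ) : (z ^ (-(1 : ℂ) / 2)) ^ 2 = z⁻¹ := by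
  rw [← Complex.cpow_nat_mul]
  norm_num [Complex.cpow_neg_one]

theorem euler_factor_identity {R : Type*} [CommRing R] (a x : R) :
    (1 - (a ^ 2 - 1) * x ^ 2 + (a ^ 2 - 1) * (x ^ 2) ^ 2 - (x ^ 2) ^ 3) +
        (1 - a * x + x ^ 2) ^ 2 * (1 - x ^ 2) =
      2 * ((1 + x ^ 2) * (1 - x ^ 2)) * (1 - a * x + x ^ 2) := by
  ring

theorem one_add_inv_mul_eq_of_add_eq {K : Type*} [Field K] {S H y c : K} (hS : S ≠ 0)
    (h : S + H ^ 2 * y = c * H) :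
    1 + S⁻¹ * H ^ 2 * y = c * (S⁻¹ * H) := by
  calc 1 + S⁻¹ * H ^ 2 * y = S⁻¹ * (S + H ^ 2 * y) := by field_simp
    _ = c * (S⁻¹ * H) := by rw [h]; ring

theorem stmt_1 (q : ℕ) (hq : Squarefree q) (α : ℕ → ℂ)
    (h2 : ∀ p ∈ q.primeFactors,
      1 - (α p ^ 2 - 1) * (p : ℂ)⁻¹ + (α p ^ 2 - 1) * ((p : ℂ)⁻¹) ^ 2 - ((p : ℂ)⁻¹) ^ 3 ≠ 0)
    (Lhalf Lsym : ℕ → ℂ)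
    (hLhalf : ∀ ℓ : ℕ, Lhalf ℓ = ∏ p ∈ ℓ.primeFactors,
      (1 - α p * (p : ℂ) ^ (-(1 : ℂ) / 2) + (p : ℂ)⁻¹)⁻¹)
    (hLsym : ∀ ℓ : ℕ, Lsym ℓ = ∏ p ∈ ℓ.primeFactors,
      (1 - (α p ^ 2 - 1) * (p : ℂ)⁻¹ + (α p ^ 2 - 1) * ((p : ℂ)⁻¹) ^ 2 - ((p : ℂ)⁻¹) ^ 3)⁻¹) :
    ∑ ℓ ∈ q.divisors, Lsym ℓ / (Lhalf ℓ) ^ 2 * ((Nat.totient ℓ : ℂ) / (ℓ : ℂ)) =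
      2 ^ q.primeFactors.card *
        (((q : ℂ) * ∏ p ∈ q.primeFactors, (1 + (p : ℂ)⁻¹)) * (Nat.totient q : ℂ) / (q : ℂ) ^ 2) *
        (Lsym q / Lhalf q) := by
  set H : ℕ → ℂ := fun p => 1 - α p * (p : ℂ) ^ (-(1 : ℂ) / 2) + (p : ℂ)⁻¹
  set S : ℕ → ℂ := fun p =>
    1 - (α p ^ 2 - 1) * (p : ℂ)⁻¹ + (α p ^ 2 - 1) * ((p : ℂ)⁻¹) ^ 2 - ((p : ℂ)⁻¹) ^ 3
  have summand (ℓ : ℕ) (hℓ : ℓ ≠ 0) : Lsym ℓ / Lhalf ℓ ^ 2 * ((ℓ.totient : ℂ) / ℓ) =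
      ∏ p ∈ ℓ.primeFactors, (S p)⁻¹ * H p ^ 2 * (1 - (p : ℂ)⁻¹) := by
    rw [hLsym, hLhalf, Nat.cast_totient_div_self hℓ, ← prod_pow, ← prod_div_distrib,
      ← prod_mul_distrib]
    simp only [div_eq_mul_inv, inv_pow, inv_inv, H, S]
  have euler_factor (p : ℕ) (hp : p ∈ q.primeFactors) : 1 + (S p)⁻¹ * H p ^ 2 * (1 - (p : ℂ)⁻¹) =
      2 * ((1 + (p : ℂ)⁻¹) * (1 - (p : ℂ)⁻¹)) * ((S p)⁻¹ * H p) := by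
    have := euler_factor_identity (α p) ((p : ℂ) ^ (-(1 : ℂ) / 2))
    rw [Complex.cpow_neg_one_half_sq] at this
    exact one_add_inv_mul_eq_of_add_eq (h2 p hp) this
  have nu_totient_factor : (q : ℂ) * (∏ p ∈ q.primeFactors, (1 + (p : ℂ)⁻¹)) * q.totient / q ^ 2 =
      ∏ p ∈ q.primeFactors, ((1 + (p : ℂ)⁻¹) * (1 - (p : ℂ)⁻¹)) := by
    rw [prod_mul_distrib, ← Nat.cast_totient_div_self hq.ne_zero]
    field_simp
  have Lsym_div_Lhalf : Lsym q / Lhalf q = ∏ p ∈ q.primeFactors, (S p)⁻¹ * H p := by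
    rw [hLsym, hLhalf, ← prod_div_distrib]
    simp only [div_inv_eq_mul, S, H]
  rw [sum_congr rfl fun ℓ hℓ => summand ℓ (Nat.pos_of_mem_divisors hℓ).ne',
    Nat.sum_divisors_prod_primeFactors_of_squarefree hq, prod_congr rfl euler_factor,
    nu_totient_factor, Lsym_div_Lhalf, prod_mul_distrib, prod_mul_distrib, prod_const]
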